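/- arXiv:2001.01577 — 3 statements merged into one kernel-verified Lean document; each statement's English description precedes it below -/
import Mathlib

section
/- In the finite options-framework model, let h be a trajectory of length T ≥ 1 such that every prefix h_t = (s_0,a_0,…,s_t) with 1 ≤ t ≤ T satisfies Pr(H_t = h_t) > 0. Then the expected number of terminations along h satisfies ∑_{t=1}^{T} E[T_t | H_t = h_t] = ∑_{t=1}^{T} ∑_{o ∈ O} β_o(s_t)·α_{t-1}(o)/(∑_{o' ∈ O} α_{t-1}(o')), where α_{t-1}(o) := μ_o(s_{t-1},a_{t-1})·F_{t-1}(o) and E[T_t | H_t = h_t] = Pr(T_t = 1 | H_t = h_t). -/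
/-!
Finite options-framework model.

We fix finite nonempty types `S` (states), `A` (actions), `O` (options), an initial
distribution `d0`, a policy over options `po`, option policies `mu`, termination
functions `beta`, and a transition function `P`.  A trajectory of length `n+1` is
given by its states `s : ℕ → S` and actions `a : ℕ → A` (only indices `0..n+1`
resp. `0..n` are relevant).  Latent option sequences are `op : Fin (n+1) → O`
(for `o_0,…,o_n`) and termination sequences `τ : Fin n → Bool` (for `τ_1,…,τ_n`,
where `τ j` corresponds to time `j+1`).
-/

open Finset

namespace OptionsModel

variable {S A O : Type} [Fintype S] [Fintype A] [Fintype O]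
  [Nonempty S] [Nonempty A] [Nonempty O] [DecidableEq O]

/-- Selection factor `c_{j+1}`: if the previous option `o_j = op j.castSucc` terminates
(`τ (j+1) = 1`) at `s_{j+1}`, a new option `o_{j+1} = op j.succ` is selected by the
policy over options; otherwise the option continues. -/
def sel (po : S → O → ℝ) (beta : O → S → ℝ) (s : ℕ → S)
    {k : ℕ} (op : Fin (k + 1) → O) (τ : Fin k → Bool) (j : Fin k) : ℝ :=
  if τ j then beta (op j.castSucc) (s (j.1 + 1)) * po (s (j.1 + 1)) (op j.succ)
  else if op j.succ = op j.castSucc then 1 - beta (op j.castSucc) (s (j.1 + 1)) else 0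

/-- Latent weight `w(h,(o_i),(τ_i))` of a trajectory of length `n+1` together with the
latent option sequence `o_0,…,o_n` and termination sequence `τ_1,…,τ_n`. -/
def w (d0 : S → ℝ) (po : S → O → ℝ) (mu : O → S → A → ℝ) (beta : O → S → ℝ)
    (P : S → A → S → ℝ) (s : ℕ → S) (a : ℕ → A) {n : ℕ}
    (op : Fin (n + 1) → O) (τ : Fin n → Bool) : ℝ :=
  d0 (s 0) * po (s 0) (op 0) * mu (op 0) (s 0) (a 0)
    * (∏ j : Fin n, P (s j.1) (a j.1) (s (j.1 + 1)) * sel po beta s op τ j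
        * mu (op j.succ) (s (j.1 + 1)) (a (j.1 + 1)))
    * P (s n) (a n) (s (n + 1))

/-- Trajectory probability `Pr(H_t = h)` for the trajectory of length `t = n+1`. -/
def prH (d0 : S → ℝ) (po : S → O → ℝ) (mu : O → S → A → ℝ) (beta : O → S → ℝ)
    (P : S → A → S → ℝ) (s : ℕ → S) (a : ℕ → A) (n : ℕ) : ℝ :=
  ∑ op : Fin (n + 1) → O, ∑ τ : Fin n → Bool, w d0 po mu beta P s a op τ

/-- Joint termination probability `Pr(T_t = 1, H_t = h)` for `t = n+1`. -/
def prT1H (d0 : S → ℝ) (po : S → O → ℝ) (mu : O → S → A → ℝ) (beta : O → S → ℝ)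
    (P : S → A → S → ℝ) (s : ℕ → S) (a : ℕ → A) (n : ℕ) : ℝ :=
  ∑ op : Fin (n + 1) → O, ∑ τ : Fin n → Bool,
    w d0 po mu beta P s a op τ * beta (op (Fin.last n)) (s (n + 1))

/-- Joint no-termination probability `Pr(T_t = 0, H_t = h)` for `t = n+1`. -/
def prT0H (d0 : S → ℝ) (po : S → O → ℝ) (mu : O → S → A → ℝ) (beta : O → S → ℝ)
    (P : S → A → S → ℝ) (s : ℕ → S) (a : ℕ → A) (n : ℕ) : ℝ :=
  ∑ op : Fin (n + 1) → O, ∑ τ : Fin n → Bool,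
    w d0 po mu beta P s a op τ * (1 - beta (op (Fin.last n)) (s (n + 1)))

/-- `Pr(O_{t-1} = o, H_t = h)` for `t = n+1`: the latent-weight sum restricted to option
sequences whose last option `o_{t-1}` equals `o`. -/
def prOlastH (d0 : S → ℝ) (po : S → O → ℝ) (mu : O → S → A → ℝ) (beta : O → S → ℝ)
    (P : S → A → S → ℝ) (s : ℕ → S) (a : ℕ → A) (n : ℕ) (o : O) : ℝ :=
  ∑ op : Fin (n + 1) → O, ∑ τ : Fin n → Bool,
    if op (Fin.last n) = o then w d0 po mu beta P s a op τ else 0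

/-- The forward variable `F_m(o)`: `F_0(o) = d0(s_0)·π(s_0,o)` and, for `m ≥ 1`, the sum
over option sequences `o_0,…,o_m` with `o_m = o` and termination sequences `τ_1,…,τ_m`
of `d0(s_0)·π(s_0,o_0)·(∏_{i=0}^{m-1} μ_{o_i}(s_i,a_i)·P(s_i,a_i,s_{i+1}))·(∏_{i=1}^m c_i)`. -/
def fwd (d0 : S → ℝ) (po : S → O → ℝ) (mu : O → S → A → ℝ) (beta : O → S → ℝ)
    (P : S → A → S → ℝ) (s : ℕ → S) (a : ℕ → A) : ℕ → O → ℝ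
  | 0, o => d0 (s 0) * po (s 0) o
  | m + 1, o =>
    ∑ op : Fin (m + 2) → O, ∑ τ : Fin (m + 1) → Bool,
      if op (Fin.last (m + 1)) = o then
        d0 (s 0) * po (s 0) (op 0)
          * (∏ j : Fin (m + 1),
              mu (op j.castSucc) (s j.1) (a j.1) * P (s j.1) (a j.1) (s (j.1 + 1)))
          * (∏ j : Fin (m + 1), sel po beta s op τ j)
      else 0

/-- `Pr(O_t = o, T_t = 0, H_t = h_t)` for `t = n+1`: the `F_t(o)` sum restricted to
termination sequences with `τ_t = 0`. -/
def prOT0H (d0 : S → ℝ) (po : S → O → ℝ) (mu : O → S → A → ℝ) (beta : O → S → ℝ)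
    (P : S → A → S → ℝ) (s : ℕ → S) (a : ℕ → A) (n : ℕ) (o : O) : ℝ :=
  ∑ op : Fin (n + 2) → O, ∑ τ : Fin (n + 1) → Bool,
    if op (Fin.last (n + 1)) = o ∧ τ (Fin.last n) = false then
      d0 (s 0) * po (s 0) (op 0)
        * (∏ j : Fin (n + 1),
            mu (op j.castSucc) (s j.1) (a j.1) * P (s j.1) (a j.1) (s (j.1 + 1)))
        * (∏ j : Fin (n + 1), sel po beta s op τ j)
    else 0

/-- The recursive function `f(h,o,i)` of Theorem 2: `f(h,o,i) = 1` for `i ≥ t` and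
otherwise the termination/continuation recursion. -/
def fRec (po : S → O → ℝ) (mu : O → S → A → ℝ) (beta : O → S → ℝ)
    (s : ℕ → S) (a : ℕ → A) (t : ℕ) (o : O) (i : ℕ) : ℝ :=
  if h : t ≤ i then 1
  else
    beta o (s i) * (∑ o' : O, po (s i) o' * mu o' (s i) (a i) * fRec po mu beta s a t o' (i + 1))
      + (1 - beta o (s i)) * mu o (s i) (a i) * fRec po mu beta s a t o (i + 1)
termination_by t - i
decreasing_by all_goals omega

/-- The option active at time `i + j - 1` just before choosing `o_{i+j}`: it is `o` when
`j = 0` (the given previous option) and `op (j-1)` otherwise. -/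
def prevOp {k : ℕ} (o : O) (op : Fin k → O) (j : Fin k) : O :=
  if _ : j.1 = 0 then o else op ⟨j.1 - 1, Nat.lt_of_le_of_lt (Nat.sub_le _ _) j.2⟩

/-- Suffix probability `G(h,o,i)` for `1 ≤ i ≤ t`: the probability of generating
`(s_i,a_i,…,s_t)` given previous state `s_{i-1}`, active option `o` and previous action
`a_{i-1}`.  For `i = t` it is `P(s_{t-1},a_{t-1},s_t)`; for `i < t` it is the sum over
latent option sequences `o_i,…,o_{t-1}` and termination indicators `τ_i,…,τ_{t-1}`
(with `o_{i-1} := o`) of `(∏_{j=i}^{t-1} P(s_{j-1},a_{j-1},s_j)·c_j·μ_{o_j}(s_j,a_j))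
· P(s_{t-1},a_{t-1},s_t)`. -/
def G (po : S → O → ℝ) (mu : O → S → A → ℝ) (beta : O → S → ℝ)
    (P : S → A → S → ℝ) (s : ℕ → S) (a : ℕ → A) (t i : ℕ) (o : O) : ℝ :=
  if i < t then
    ∑ op : Fin (t - i) → O, ∑ τ : Fin (t - i) → Bool,
      (∏ j : Fin (t - i),
          P (s (i + j.1 - 1)) (a (i + j.1 - 1)) (s (i + j.1))
            * (if τ j then
                beta (prevOp o op j) (s (i + j.1)) * po (s (i + j.1)) (op j)
              else if op j = prevOp o op j then 1 - beta (prevOp o op j) (s (i + j.1))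
              else 0)
            * mu (op j) (s (i + j.1)) (a (i + j.1)))
        * P (s (t - 1)) (a (t - 1)) (s t)
  else P (s (t - 1)) (a (t - 1)) (s t)

variable (d0 : S → ℝ) (po : S → O → ℝ) (mu : O → S → A → ℝ)
  (beta : O → S → ℝ) (P : S → A → S → ℝ) (s : ℕ → S) (a : ℕ → A)

lemma w_eq (n : ℕ) (op : Fin (n + 1) → O) (τ : Fin n → Bool) :
    w d0 po mu beta P s a op τ =
      (d0 (s 0) * po (s 0) (op 0)
        * (∏ j : Fin n, mu (op j.castSucc) (s j.1) (a j.1) * P (s j.1) (a j.1) (s (j.1 + 1)))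
        * (∏ j : Fin n, sel po beta s op τ j))
        * (mu (op (Fin.last n)) (s n) (a n) * P (s n) (a n) (s (n + 1))) := by
  unfold w
  have h2 : mu (op 0) (s 0) (a 0) * ∏ j : Fin n, mu (op j.succ) (s (j.1 + 1)) (a (j.1 + 1))
      = (∏ j : Fin n, mu (op j.castSucc) (s j.1) (a j.1)) * mu (op (Fin.last n)) (s n) (a n) := by
    have hA := Fin.prod_univ_succ (fun j : Fin (n + 1) => mu (op j) (s j.1) (a j.1))
    have hB := Fin.prod_univ_castSucc (fun j : Fin (n + 1) => mu (op j) (s j.1) (a j.1))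
    simp only [Fin.val_succ, Fin.coe_castSucc, Fin.val_last, Fin.val_zero] at hA hB
    rw [← hA, hB]
  have h1 : (∏ j : Fin n, P (s j.1) (a j.1) (s (j.1 + 1)) * sel po beta s op τ j
        * mu (op j.succ) (s (j.1 + 1)) (a (j.1 + 1)))
      = (∏ j : Fin n, P (s j.1) (a j.1) (s (j.1 + 1)))
        * (∏ j : Fin n, sel po beta s op τ j)
        * (∏ j : Fin n, mu (op j.succ) (s (j.1 + 1)) (a (j.1 + 1))) := by
    rw [← Finset.prod_mul_distrib, ← Finset.prod_mul_distrib]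
  have h3 : (∏ j : Fin n, mu (op j.castSucc) (s j.1) (a j.1) * P (s j.1) (a j.1) (s (j.1 + 1)))
      = (∏ j : Fin n, mu (op j.castSucc) (s j.1) (a j.1))
        * (∏ j : Fin n, P (s j.1) (a j.1) (s (j.1 + 1))) := Finset.prod_mul_distrib
  rw [h1, h3]
  linear_combination (d0 (s 0) * po (s 0) (op 0)
    * (∏ j : Fin n, P (s j.1) (a j.1) (s (j.1 + 1)))
    * (∏ j : Fin n, sel po beta s op τ j) * P (s n) (a n) (s (n + 1))) * h2

lemma sum_w_mul (n : ℕ) (f : O → ℝ) :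
    (∑ op : Fin (n + 1) → O, ∑ τ : Fin n → Bool,
        w d0 po mu beta P s a op τ * f (op (Fin.last n)))
      = P (s n) (a n) (s (n + 1))
        * ∑ o : O, f o * (mu o (s n) (a n) * fwd d0 po mu beta P s a n o) := by
  cases n with
  | zero =>
    rw [Finset.mul_sum]
    refine Fintype.sum_equiv (Equiv.funUnique (Fin 1) O) _ _ (fun op => ?_)
    simp only [Equiv.funUnique_apply]
    simp [w, fwd, sel]
    ring
  | succ m =>
    show _ = P (s (m + 1)) (a (m + 1)) (s (m + 2)) * ∑ o : O, f o * (mu o (s (m + 1)) (a (m + 1))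
      * ∑ op : Fin (m + 2) → O, ∑ τ : Fin (m + 1) → Bool,
        if op (Fin.last (m + 1)) = o then
          d0 (s 0) * po (s 0) (op 0)
            * (∏ j : Fin (m + 1),
                mu (op j.castSucc) (s j.1) (a j.1) * P (s j.1) (a j.1) (s (j.1 + 1)))
            * (∏ j : Fin (m + 1), sel po beta s op τ j)
        else 0)
    rw [Finset.mul_sum]
    simp only [Finset.mul_sum, mul_ite, mul_zero]
    conv_rhs => rw [Finset.sum_comm]
    refine Finset.sum_congr rfl fun op _ => ?_
    conv_rhs => rw [Finset.sum_comm]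
    refine Finset.sum_congr rfl fun τ _ => ?_
    simp only [Finset.sum_ite_eq, Finset.mem_univ, if_true]
    rw [w_eq]
    ring

/-- If every prefix `h_t` (`1 ≤ t ≤ T`, `T = N+1`) of a trajectory has
positive probability, then `∑_{t=1}^T E[T_t | H_t = h_t]
= ∑_{t=1}^T ∑_o β_o(s_t)·α_{t-1}(o)/(∑_o' α_{t-1}(o'))`, where
`α_{t-1}(o) = μ_o(s_{t-1},a_{t-1})·F_{t-1}(o)` and
`E[T_t | H_t = h_t] = Pr(T_t = 1 | H_t = h_t)`. -/
theorem expected_number_of_terminations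
    (hd0 : ∀ x, 0 ≤ d0 x) (hd0s : ∑ x : S, d0 x = 1)
    (hpo : ∀ x o, 0 ≤ po x o) (hpos : ∀ x : S, ∑ o : O, po x o = 1)
    (hmu : ∀ o x u, 0 ≤ mu o x u) (hmus : ∀ o x, ∑ u : A, mu o x u = 1)
    (hbeta : ∀ o x, 0 ≤ beta o x ∧ beta o x ≤ 1)
    (hP : ∀ x u y, 0 ≤ P x u y) (hPs : ∀ x u, ∑ y : S, P x u y = 1)
    (N : ℕ) (hH : ∀ n ≤ N, 0 < prH d0 po mu beta P s a n) :
    ∑ n ∈ Finset.range (N + 1), prT1H d0 po mu beta P s a n / prH d0 po mu beta P s a n =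
      ∑ n ∈ Finset.range (N + 1), ∑ o : O,
        beta o (s (n + 1)) * (mu o (s n) (a n) * fwd d0 po mu beta P s a n o) /
          (∑ o' : O, mu o' (s n) (a n) * fwd d0 po mu beta P s a n o') := by
  refine Finset.sum_congr rfl fun n hn => ?_
  have hn' : n ≤ N := by
    have := Finset.mem_range.mp hn; omega
  have hHn : prH d0 po mu beta P s a n
      = P (s n) (a n) (s (n + 1)) * ∑ o : O, mu o (s n) (a n) * fwd d0 po mu beta P s a n o := by
    have h := sum_w_mul d0 po mu beta P s a n (fun _ => (1 : ℝ))
    simpa [prH, mul_one, one_mul] using h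
  have hTn : prT1H d0 po mu beta P s a n
      = P (s n) (a n) (s (n + 1)) * ∑ o : O,
          beta o (s (n + 1)) * (mu o (s n) (a n) * fwd d0 po mu beta P s a n o) := by
    have h := sum_w_mul d0 po mu beta P s a n (fun o => beta o (s (n + 1)))
    simpa [prT1H] using h
  have hPne : P (s n) (a n) (s (n + 1)) ≠ 0 := by
    intro h0
    have := hH n hn'
    rw [hHn, h0, zero_mul] at this
    exact lt_irrefl 0 this
  rw [hTn, hHn, mul_div_mul_left _ _ hPne, Finset.sum_div]

end OptionsModel
end

section
/- In the finite options-framework model, the forward variable decomposes over the termination event at time t: for every trajectory h_t of length t ≥ 1 and every option o ∈ O, F_t(o) = π(s_t,o)·Pr(T_t = 1, H_t = h_t) + Pr(O_t = o, T_t = 0, H_t = h_t). -/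
/-!
Finite options-framework model.

We fix finite nonempty types `S` (states), `A` (actions), `O` (options), an initial
distribution `d0`, a policy over options `po`, option policies `mu`, termination
functions `beta`, and a transition function `P`.  A trajectory of length `n+1` is
given by its states `s : ℕ → S` and actions `a : ℕ → A` (only indices `0..n+1`
resp. `0..n` are relevant).  Latent option sequences are `op : Fin (n+1) → O`
(for `o_0,…,o_n`) and termination sequences `τ : Fin n → Bool` (for `τ_1,…,τ_n`,
where `τ j` corresponds to time `j+1`).
-/

open Finset

namespace OptionsModel

variable {S A O : Type} [Fintype S] [Fintype A] [Fintype O]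
  [Nonempty S] [Nonempty A] [Nonempty O] [DecidableEq O]

private lemma sum_fn_snoc {α β : Type} [Fintype α] [AddCommMonoid β] {n : ℕ}
    (f : (Fin (n + 1) → α) → β) :
    ∑ g : Fin (n + 1) → α, f g = ∑ x : α, ∑ g : Fin n → α, f (Fin.snoc g x) := by
  rw [← Equiv.sum_comp (Fin.snocEquiv fun _ => α) f, Fintype.sum_prod_type]
  rfl

private lemma sel_snoc_castSucc (po : S → O → ℝ) (beta : O → S → ℝ) (s : ℕ → S)
    {n : ℕ} (op : Fin (n + 1) → O) (x : O) (τ : Fin n → Bool) (b : Bool) (j : Fin n) :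
    sel po beta s (Fin.snoc op x) (Fin.snoc τ b) j.castSucc = sel po beta s op τ j := by
  simp only [sel, Fin.coe_castSucc, Fin.succ_castSucc, Fin.snoc_castSucc]

private lemma sel_snoc_last (po : S → O → ℝ) (beta : O → S → ℝ) (s : ℕ → S)
    {n : ℕ} (op : Fin (n + 1) → O) (x : O) (τ : Fin n → Bool) (b : Bool) :
    sel po beta s (Fin.snoc op x) (Fin.snoc τ b) (Fin.last n)
      = if b then beta (op (Fin.last n)) (s (n + 1)) * po (s (n + 1)) x
        else if x = op (Fin.last n) then 1 - beta (op (Fin.last n)) (s (n + 1)) else 0 := by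
  simp only [sel, Fin.snoc_last, Fin.succ_last, Fin.snoc_castSucc, Fin.val_last]

private lemma termA (d0 : S → ℝ) (po : S → O → ℝ) (mu : O → S → A → ℝ)
    (beta : O → S → ℝ) (P : S → A → S → ℝ) (s : ℕ → S) (a : ℕ → A)
    {n : ℕ} (op : Fin (n + 1) → O) (τ : Fin n → Bool) (o : O) :
    d0 (s 0) * po (s 0) ((Fin.snoc op o : Fin (n + 2) → O) 0)
      * (∏ j : Fin (n + 1),
          mu ((Fin.snoc op o : Fin (n + 2) → O) j.castSucc) (s j.1) (a j.1)
            * P (s j.1) (a j.1) (s (j.1 + 1)))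
      * (∏ j : Fin (n + 1), sel po beta s (Fin.snoc op o) (Fin.snoc τ true) j)
    = po (s (n + 1)) o
        * (w d0 po mu beta P s a op τ * beta (op (Fin.last n)) (s (n + 1))) := by
  have h0 : (Fin.snoc op o : Fin (n + 2) → O) 0 = op 0 := by
    have h : (0 : Fin (n + 2)) = Fin.castSucc 0 := rfl
    rw [h, Fin.snoc_castSucc]
  have hmuP : (∏ j : Fin (n + 1),
        mu ((Fin.snoc op o : Fin (n + 2) → O) j.castSucc) (s j.1) (a j.1)
          * P (s j.1) (a j.1) (s (j.1 + 1)))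
      = (mu (op 0) (s 0) (a 0) * ∏ j : Fin n, mu (op j.succ) (s (j.1 + 1)) (a (j.1 + 1)))
        * ((∏ j : Fin n, P (s j.1) (a j.1) (s (j.1 + 1))) * P (s n) (a n) (s (n + 1))) := by
    simp only [Fin.snoc_castSucc]
    rw [Finset.prod_mul_distrib, Fin.prod_univ_succ, Fin.prod_univ_castSucc]
    simp [Fin.val_succ, Fin.coe_castSucc, Fin.val_last]
  have hsel : (∏ j : Fin (n + 1), sel po beta s (Fin.snoc op o) (Fin.snoc τ true) j)
      = (∏ j : Fin n, sel po beta s op τ j)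
        * (beta (op (Fin.last n)) (s (n + 1)) * po (s (n + 1)) o) := by
    rw [Fin.prod_univ_castSucc, sel_snoc_last]
    simp only [sel_snoc_castSucc, if_true]
  have hw : w d0 po mu beta P s a op τ
      = d0 (s 0) * po (s 0) (op 0) * mu (op 0) (s 0) (a 0)
        * ((∏ j : Fin n, P (s j.1) (a j.1) (s (j.1 + 1)))
            * (∏ j : Fin n, sel po beta s op τ j)
            * (∏ j : Fin n, mu (op j.succ) (s (j.1 + 1)) (a (j.1 + 1))))
        * P (s n) (a n) (s (n + 1)) := by
    rw [w, Finset.prod_mul_distrib, Finset.prod_mul_distrib]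
  rw [h0, hmuP, hsel, hw]
  ring

variable (d0 : S → ℝ) (po : S → O → ℝ) (mu : O → S → A → ℝ)
  (beta : O → S → ℝ) (P : S → A → S → ℝ) (s : ℕ → S) (a : ℕ → A)

/-- The forward variable decomposes over the termination event at time
`t = n+1`: `F_t(o) = π(s_t,o)·Pr(T_t = 1, H_t = h_t) + Pr(O_t = o, T_t = 0, H_t = h_t)`. -/
theorem forward_termination_decomposition
    (hd0 : ∀ x, 0 ≤ d0 x) (hd0s : ∑ x : S, d0 x = 1)
    (hpo : ∀ x o, 0 ≤ po x o) (hpos : ∀ x : S, ∑ o : O, po x o = 1)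
    (hmu : ∀ o x u, 0 ≤ mu o x u) (hmus : ∀ o x, ∑ u : A, mu o x u = 1)
    (hbeta : ∀ o x, 0 ≤ beta o x ∧ beta o x ≤ 1)
    (hP : ∀ x u y, 0 ≤ P x u y) (hPs : ∀ x u, ∑ y : S, P x u y = 1)
    (n : ℕ) (o : O) :
    fwd d0 po mu beta P s a (n + 1) o =
      po (s (n + 1)) o * prT1H d0 po mu beta P s a n + prOT0H d0 po mu beta P s a n o := by
  have hfwd : fwd d0 po mu beta P s a (n + 1) o
      = ∑ op : Fin (n + 1) → O, ∑ τ : Fin n → Bool,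
          ((d0 (s 0) * po (s 0) ((Fin.snoc op o : Fin (n + 2) → O) 0)
              * (∏ j : Fin (n + 1),
                  mu ((Fin.snoc op o : Fin (n + 2) → O) j.castSucc) (s j.1) (a j.1)
                    * P (s j.1) (a j.1) (s (j.1 + 1)))
              * (∏ j : Fin (n + 1), sel po beta s (Fin.snoc op o) (Fin.snoc τ true) j))
            + (d0 (s 0) * po (s 0) ((Fin.snoc op o : Fin (n + 2) → O) 0)
              * (∏ j : Fin (n + 1),
                  mu ((Fin.snoc op o : Fin (n + 2) → O) j.castSucc) (s j.1) (a j.1)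
                    * P (s j.1) (a j.1) (s (j.1 + 1)))
              * (∏ j : Fin (n + 1), sel po beta s (Fin.snoc op o) (Fin.snoc τ false) j))) := by
    rw [fwd, sum_fn_snoc]
    rw [Finset.sum_eq_single_of_mem o (Finset.mem_univ o) (fun x _ hx => by
      refine Finset.sum_eq_zero fun op _ => Finset.sum_eq_zero fun τ _ => ?_
      rw [Fin.snoc_last, if_neg hx])]
    refine Finset.sum_congr rfl fun op _ => ?_
    rw [sum_fn_snoc (fun τ : Fin (n + 1) → Bool =>
      if (Fin.snoc op o : Fin (n + 2) → O) (Fin.last (n + 1)) = o then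
        d0 (s 0) * po (s 0) ((Fin.snoc op o : Fin (n + 2) → O) 0)
          * (∏ j : Fin (n + 1),
              mu ((Fin.snoc op o : Fin (n + 2) → O) j.castSucc) (s j.1) (a j.1)
                * P (s j.1) (a j.1) (s (j.1 + 1)))
          * (∏ j : Fin (n + 1), sel po beta s (Fin.snoc op o) τ j)
      else 0), Fintype.sum_bool, ← Finset.sum_add_distrib]
    refine Finset.sum_congr rfl fun τ _ => ?_
    rw [Fin.snoc_last, if_pos rfl, if_pos rfl]
  have hOT0 : prOT0H d0 po mu beta P s a n o
      = ∑ op : Fin (n + 1) → O, ∑ τ : Fin n → Bool,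
          d0 (s 0) * po (s 0) ((Fin.snoc op o : Fin (n + 2) → O) 0)
            * (∏ j : Fin (n + 1),
                mu ((Fin.snoc op o : Fin (n + 2) → O) j.castSucc) (s j.1) (a j.1)
                  * P (s j.1) (a j.1) (s (j.1 + 1)))
            * (∏ j : Fin (n + 1), sel po beta s (Fin.snoc op o) (Fin.snoc τ false) j) := by
    rw [prOT0H, sum_fn_snoc]
    rw [Finset.sum_eq_single_of_mem o (Finset.mem_univ o) (fun x _ hx => by
      refine Finset.sum_eq_zero fun op _ => Finset.sum_eq_zero fun τ _ => ?_
      rw [Fin.snoc_last, if_neg (by exact fun h => hx h.1)])]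
    refine Finset.sum_congr rfl fun op _ => ?_
    rw [sum_fn_snoc (fun τ : Fin (n + 1) → Bool =>
      if (Fin.snoc op o : Fin (n + 2) → O) (Fin.last (n + 1)) = o ∧ τ (Fin.last n) = false then
        d0 (s 0) * po (s 0) ((Fin.snoc op o : Fin (n + 2) → O) 0)
          * (∏ j : Fin (n + 1),
              mu ((Fin.snoc op o : Fin (n + 2) → O) j.castSucc) (s j.1) (a j.1)
                * P (s j.1) (a j.1) (s (j.1 + 1)))
          * (∏ j : Fin (n + 1), sel po beta s (Fin.snoc op o) τ j)
      else 0), Fintype.sum_bool]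
    simp only [Fin.snoc_last]
    rw [Finset.sum_eq_zero (fun τ _ => by simp), zero_add]
    refine Finset.sum_congr rfl fun τ _ => ?_
    simp
  have hT1 : po (s (n + 1)) o * prT1H d0 po mu beta P s a n
      = ∑ op : Fin (n + 1) → O, ∑ τ : Fin n → Bool,
          d0 (s 0) * po (s 0) ((Fin.snoc op o : Fin (n + 2) → O) 0)
            * (∏ j : Fin (n + 1),
                mu ((Fin.snoc op o : Fin (n + 2) → O) j.castSucc) (s j.1) (a j.1)
                  * P (s j.1) (a j.1) (s (j.1 + 1)))
            * (∏ j : Fin (n + 1), sel po beta s (Fin.snoc op o) (Fin.snoc τ true) j) := by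
    rw [prT1H, Finset.mul_sum]
    refine Finset.sum_congr rfl fun op _ => ?_
    rw [Finset.mul_sum]
    refine Finset.sum_congr rfl fun τ _ => ?_
    exact (termA d0 po mu beta P s a op τ o).symm
  rw [hfwd, hOT0, hT1, ← Finset.sum_add_distrib]
  refine Finset.sum_congr rfl fun op _ => ?_
  rw [← Finset.sum_add_distrib]

end OptionsModel
end

section
/- In the finite options-framework model, the suffix probability factors as the recursive function f times the product of transition probabilities: for every trajectory h of length t, every option o ∈ O, and every 1 ≤ i ≤ t, G(h,o,i) = f(h,o,i)·∏_{k=i-1}^{t-1} P(s_k,a_k,s_{k+1}). -/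
/-!
Finite options-framework model.

We fix finite nonempty types `S` (states), `A` (actions), `O` (options), an initial
distribution `d0`, a policy over options `po`, option policies `mu`, termination
functions `beta`, and a transition function `P`.  A trajectory of length `n+1` is
given by its states `s : ℕ → S` and actions `a : ℕ → A` (only indices `0..n+1`
resp. `0..n` are relevant).  Latent option sequences are `op : Fin (n+1) → O`
(for `o_0,…,o_n`) and termination sequences `τ : Fin n → Bool` (for `τ_1,…,τ_n`,
where `τ j` corresponds to time `j+1`).
-/

open Finset

namespace OptionsModel

variable {S A O : Type} [Fintype S] [Fintype A] [Fintype O]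
  [Nonempty S] [Nonempty A] [Nonempty O] [DecidableEq O]

variable (d0 : S → ℝ) (po : S → O → ℝ) (mu : O → S → A → ℝ)
  (beta : O → S → ℝ) (P : S → A → S → ℝ) (s : ℕ → S) (a : ℕ → A)


set_option linter.unusedSectionVars false

/-- The suffix latent-weight sum with `n` remaining steps starting at time `i`,
excluding the final transition factor. -/
def Gaux' (n i : ℕ) (o : O) : ℝ :=
  ∑ op : Fin n → O, ∑ τ : Fin n → Bool,
    ∏ j : Fin n,
      P (s (i + j.1 - 1)) (a (i + j.1 - 1)) (s (i + j.1))
        * (if τ j then beta (prevOp o op j) (s (i + j.1)) * po (s (i + j.1)) (op j)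
           else if op j = prevOp o op j then 1 - beta (prevOp o op j) (s (i + j.1)) else 0)
        * mu (op j) (s (i + j.1)) (a (i + j.1))

lemma prevOp_cons_succ {n : ℕ} (o o' : O) (g : Fin n → O) (j : Fin n) :
    prevOp o (Fin.cons o' g) j.succ = prevOp o' g j := by
  unfold prevOp
  rw [dif_neg (by simp [Fin.val_succ])]
  rcases Nat.eq_zero_or_pos j.1 with h | h
  · rw [dif_pos h]
    have : (⟨j.succ.1 - 1, Nat.lt_of_le_of_lt (Nat.sub_le _ _) j.succ.2⟩ : Fin (n+1)) = 0 := by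
      ext; simp [Fin.val_succ, h]
    rw [this, Fin.cons_zero]
  · rw [dif_neg (by omega)]
    have : (⟨j.succ.1 - 1, Nat.lt_of_le_of_lt (Nat.sub_le _ _) j.succ.2⟩ : Fin (n+1)) =
        Fin.succ ⟨j.1 - 1, Nat.lt_of_le_of_lt (Nat.sub_le _ _) j.2⟩ := by
      ext; simp [Fin.val_succ]; omega
    rw [this, Fin.cons_succ]

lemma prevOp_cons_zero {n : ℕ} (o o' : O) (g : Fin n → O) :
    prevOp o (Fin.cons o' g) 0 = o := by
  simp [prevOp]

lemma Gaux'_zero (i : ℕ) (o : O) : Gaux' po mu beta P s a 0 i o = 1 := by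
  simp [Gaux']

lemma pi_succ_sum {β : Type} [Fintype β] (n : ℕ) (F : (Fin (n+1) → β) → ℝ) :
    ∑ f : Fin (n+1) → β, F f = ∑ x : β, ∑ g : Fin n → β, F (Fin.cons x g) := by
  rw [← Equiv.sum_comp (Fin.consEquiv fun _ : Fin (n+1) => β) F, Fintype.sum_prod_type]
  rfl

lemma Gaux'_shift (n i : ℕ) (o' : O) :
    Gaux' po mu beta P s a n (i + 1) o' =
      ∑ g : Fin n → O, ∑ τ' : Fin n → Bool,
        ∏ j : Fin n,
          P (s (i + (j.1 + 1) - 1)) (a (i + (j.1 + 1) - 1)) (s (i + (j.1 + 1)))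
            * (if τ' j then
                  beta (prevOp o' g j) (s (i + (j.1 + 1))) * po (s (i + (j.1 + 1))) (g j)
               else if g j = prevOp o' g j then
                  1 - beta (prevOp o' g j) (s (i + (j.1 + 1)))
               else 0)
            * mu (g j) (s (i + (j.1 + 1))) (a (i + (j.1 + 1))) := by
  unfold Gaux'
  refine Finset.sum_congr rfl fun g _ => Finset.sum_congr rfl fun t _ =>
    Finset.prod_congr rfl fun j _ => ?_
  have h : i + 1 + j.1 = i + (j.1 + 1) := by omega
  rw [h]

lemma Gaux'_succ (n i : ℕ) (o : O) :
    Gaux' po mu beta P s a (n + 1) i o =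
      P (s (i - 1)) (a (i - 1)) (s i) *
        (beta o (s i) *
            ∑ o' : O, po (s i) o' * (mu o' (s i) (a i) * Gaux' po mu beta P s a n (i + 1) o')
          + (1 - beta o (s i)) *
            (mu o (s i) (a i) * Gaux' po mu beta P s a n (i + 1) o)) := by
  conv_lhs => rw [Gaux']
  rw [pi_succ_sum]
  conv_lhs => enter [2, o', 2, g]; rw [pi_succ_sum]
  simp only [Fin.prod_univ_succ]
  simp only [Fin.cons_zero, Fin.cons_succ]
  simp only [prevOp_cons_zero, prevOp_cons_succ]
  simp only [Fin.val_zero, Fin.val_succ, Nat.add_zero]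
  trans ∑ o' : O,
      (P (s (i - 1)) (a (i - 1)) (s i) * (beta o (s i) * po (s i) o') * mu o' (s i) (a i)
        + P (s (i - 1)) (a (i - 1)) (s i) *
            (if o' = o then 1 - beta o (s i) else 0) * mu o' (s i) (a i))
        * Gaux' po mu beta P s a n (i + 1) o'
  · refine Finset.sum_congr rfl fun o' _ => ?_
    rw [Finset.sum_comm, Fintype.sum_bool]
    simp only [if_true, if_false, Bool.false_eq_true, Bool.true_eq_false, ite_true, ite_false]
    simp only [← Finset.mul_sum]
    rw [← Gaux'_shift]
    ring
  · simp only [Finset.mul_sum, mul_add, add_mul, Finset.sum_add_distrib, mul_ite, ite_mul,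
      mul_zero, zero_mul, Finset.sum_ite_eq', Finset.mem_univ, if_true]
    congr 1
    · apply Finset.sum_congr rfl
      intro x _
      ring
    · ring

lemma Gaux'_eq_fRec (n : ℕ) : ∀ i : ℕ, 1 ≤ i → ∀ o : O,
    Gaux' po mu beta P s a n i o =
      fRec po mu beta s a (i + n) o i *
        ∏ k ∈ Finset.Ico (i - 1) (i + n - 1), P (s k) (a k) (s (k + 1)) := by
  induction n with
  | zero =>
    intro i hi o
    have h1 : fRec po mu beta s a (i + 0) o i = 1 := by
      rw [fRec]; rw [dif_pos (by omega)]
    have h2 : Finset.Ico (i - 1) (i + 0 - 1) = ∅ := by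
      apply Finset.Ico_eq_empty; omega
    rw [Gaux'_zero, h1, h2]; simp
  | succ n ih =>
    intro i hi o
    rw [Gaux'_succ]
    have e1 : i + 1 + n = i + (n + 1) := by omega
    have hT : ∀ o' : O, Gaux' po mu beta P s a n (i + 1) o' =
        fRec po mu beta s a (i + (n + 1)) o' (i + 1) *
          ∏ k ∈ Finset.Ico i (i + n), P (s k) (a k) (s (k + 1)) := by
      intro o'
      rw [ih (i + 1) (by omega) o', e1, show i + 1 - 1 = i from by omega,
        show i + (n + 1) - 1 = i + n from by omega]
    simp only [hT]
    have hsplit : (∏ k ∈ Finset.Ico (i - 1) (i + (n + 1) - 1), P (s k) (a k) (s (k + 1)))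
        = P (s (i - 1)) (a (i - 1)) (s i)
            * ∏ k ∈ Finset.Ico i (i + n), P (s k) (a k) (s (k + 1)) := by
      rw [Finset.prod_eq_prod_Ico_succ_bot (show i - 1 < i + (n + 1) - 1 from by omega)]
      rw [show i - 1 + 1 = i from by omega, show i + (n + 1) - 1 = i + n from by omega]
    rw [hsplit]
    have hf : fRec po mu beta s a (i + (n + 1)) o i =
        beta o (s i) * (∑ o' : O, po (s i) o' * mu o' (s i) (a i)
            * fRec po mu beta s a (i + (n + 1)) o' (i + 1))
          + (1 - beta o (s i)) * mu o (s i) (a i)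
            * fRec po mu beta s a (i + (n + 1)) o (i + 1) := by
      rw [fRec]; rw [dif_neg (by omega)]
    rw [hf]
    have hs : ∑ o' : O, po (s i) o' * (mu o' (s i) (a i)
          * (fRec po mu beta s a (i + (n + 1)) o' (i + 1)
              * ∏ k ∈ Finset.Ico i (i + n), P (s k) (a k) (s (k + 1))))
        = (∑ o' : O, po (s i) o' * mu o' (s i) (a i)
              * fRec po mu beta s a (i + (n + 1)) o' (i + 1))
            * ∏ k ∈ Finset.Ico i (i + n), P (s k) (a k) (s (k + 1)) := by
      rw [Finset.sum_mul]; apply Finset.sum_congr rfl; intro x _; ring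
    rw [hs]; ring

/-- For every trajectory of length `t`, every option `o` and every
`1 ≤ i ≤ t`, `G(h,o,i) = f(h,o,i)·∏_{k=i-1}^{t-1} P(s_k,a_k,s_{k+1})`. -/
theorem suffix_prob_factorization
    (hd0 : ∀ x, 0 ≤ d0 x) (hd0s : ∑ x : S, d0 x = 1)
    (hpo : ∀ x o, 0 ≤ po x o) (hpos : ∀ x : S, ∑ o : O, po x o = 1)
    (hmu : ∀ o x u, 0 ≤ mu o x u) (hmus : ∀ o x, ∑ u : A, mu o x u = 1)
    (hbeta : ∀ o x, 0 ≤ beta o x ∧ beta o x ≤ 1)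
    (hP : ∀ x u y, 0 ≤ P x u y) (hPs : ∀ x u, ∑ y : S, P x u y = 1)
    (t i : ℕ) (hi1 : 1 ≤ i) (hit : i ≤ t) (o : O) :
    G po mu beta P s a t i o =
      fRec po mu beta s a t o i *
        ∏ k ∈ Finset.Icc (i - 1) (t - 1), P (s k) (a k) (s (k + 1)) := by
  rcases eq_or_lt_of_le hit with heq | hlt
  · subst heq
    rw [G, if_neg (lt_irrefl i)]
    have h1 : fRec po mu beta s a i o i = 1 := by
      rw [fRec]; rw [dif_pos le_rfl]
    have h2 : Finset.Icc (i - 1) (i - 1) = {i - 1} := Finset.Icc_self _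
    rw [h1, h2, Finset.prod_singleton, one_mul, show i - 1 + 1 = i from by omega]
  · rw [G, if_pos hlt]
    simp only [← Finset.sum_mul]
    show Gaux' po mu beta P s a (t - i) i o * P (s (t - 1)) (a (t - 1)) (s t) = _
    rw [Gaux'_eq_fRec po mu beta P s a (t - i) i hi1 o,
      show i + (t - i) = t from by omega]
    have hIcc : Finset.Icc (i - 1) (t - 1) = Finset.Ico (i - 1) ((t - 1) + 1) := by
      rw [Finset.Ico_add_one_right_eq_Icc]
    rw [hIcc, Finset.prod_Ico_succ_top (show i - 1 ≤ t - 1 from by omega),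
      show t - 1 + 1 = t from by omega]
    ring

end OptionsModel
end
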